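/- arXiv:1512.03284 — 3 statements merged into one kernel-verified Lean document; each statement's English description precedes it below -/
import Mathlib

section
/- Let n,d ≥ 2 be integers, f ∈ H with Bombieri–Weyl norm ‖f‖ = 1, ζ ∈ ℂⁿ∖{0}, and η ∈ ℂ with f(ζ) = η^{d−1}·ζ, and suppose the restriction of DF_f(ζ,η) to (ζ,η)^⊥ is invertible. Then 1 ≤ 2d·μ(f,ζ,η). -/
noncomputable section

open scoped BigOperators

/-- `ℂⁿ` with the hermitian (L2) norm. -/
abbrev Cn (n : ℕ) : Type := EuclideanSpace ℂ (Fin n)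

/-- `ℂⁿ × ℂ` with the hermitian (L2) norm. -/
abbrev CnC (n : ℕ) : Type := WithLp 2 (EuclideanSpace ℂ (Fin n) × ℂ)

/-- The pair `(v, η) ∈ ℂⁿ × ℂ`. -/
def mkPair {n : ℕ} (v : Cn n) (η : ℂ) : CnC n := (WithLp.equiv 2 (Cn n × ℂ)).symm (v, η)

/-- Squared Bombieri-Weyl norm of a polynomial of degree `d` in `n` variables:
for `p = ∑ a_α √(d choose α) X^α` it equals `∑ |a_α|²`, i.e.
`∑ |coeff α p|² * α! / d!`. -/
def bwNormSq (n d : ℕ) (p : MvPolynomial (Fin n) ℂ) : ℝ :=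
  ∑ α ∈ p.support,
    (‖p.coeff α‖) ^ 2 * (∏ j, Nat.factorial (α j) : ℝ) / (Nat.factorial d : ℝ)

/-- Bombieri-Weyl norm of a system of `n` polynomials. -/
def bwNorm (n d : ℕ) (f : Fin n → MvPolynomial (Fin n) ℂ) : ℝ :=
  Real.sqrt (∑ i, bwNormSq n d (f i))

/-- Real part of the Bombieri-Weyl inner product of two systems. -/
def bwInnerRe (n d : ℕ) (f g : Fin n → MvPolynomial (Fin n) ℂ) : ℝ :=
  ∑ i, ∑ α ∈ (f i).support ∪ (g i).support,
    ((f i).coeff α * (starRingEnd ℂ) ((g i).coeff α)).re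
      * (∏ j, Nat.factorial (α j) : ℝ) / (Nat.factorial d : ℝ)

/-- Spherical (angular) distance of two systems w.r.t. the Bombieri-Weyl inner product. -/
def dSH (n d : ℕ) (f g : Fin n → MvPolynomial (Fin n) ℂ) : ℝ :=
  Real.arccos (bwInnerRe n d f g / (bwNorm n d f * bwNorm n d g))

/-- The map `F_f : ℂⁿ × ℂ → ℂⁿ`, `(X, Λ) ↦ f(X) - Λ^{d-1} X`. -/
def FF (n d : ℕ) (f : Fin n → MvPolynomial (Fin n) ℂ) (w : CnC n) : Cn n :=
  (WithLp.equiv 2 (Fin n → ℂ)).symm fun i =>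
    MvPolynomial.eval (fun j => ((WithLp.equiv 2 (Cn n × ℂ)) w).1 j) (f i)
      - ((WithLp.equiv 2 (Cn n × ℂ)) w).2 ^ (d - 1) * ((WithLp.equiv 2 (Cn n × ℂ)) w).1 i

/-- The hermitian orthogonal complement of `ℂ·w` in `ℂⁿ × ℂ`. -/
def perp {n : ℕ} (w : CnC n) : Submodule ℂ (CnC n) := (ℂ ∙ w)ᗮ

/-- The derivative `DF_f(w)` restricted to the subspace `u^⊥`. -/
def DFr (n d : ℕ) (f : Fin n → MvPolynomial (Fin n) ℂ) (w u : CnC n) :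
    perp u →L[ℂ] Cn n :=
  (fderiv ℂ (FF n d f) w).comp (perp u).subtypeL

/-- `DF_f(w)|_{u^⊥}` is invertible (as a map onto `ℂⁿ`). -/
def RestrInvertible (n d : ℕ) (f : Fin n → MvPolynomial (Fin n) ℂ) (w u : CnC n) : Prop :=
  (DFr n d f w u).IsInvertible

/-- The condition number `μ(f, v, λ) = ‖v‖^{d-1} ‖(DF_f(v,λ)|_{(v,λ)^⊥})⁻¹‖`
(the value is meaningful whenever the restriction is invertible). -/
def mu (n d : ℕ) (f : Fin n → MvPolynomial (Fin n) ℂ) (w : CnC n) : ℝ :=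
  ‖((WithLp.equiv 2 (Cn n × ℂ)) w).1‖ ^ (d - 1) * ‖(DFr n d f w w).inverse‖

/-- The block-diagonal map `diag(c·I_n, c')` on `ℂⁿ × ℂ`. -/
def diagMap (n : ℕ) (c c' : ℂ) : CnC n →L[ℂ] CnC n :=
  (((WithLp.prodContinuousLinearEquiv 2 ℂ (Cn n) ℂ).symm :
      (Cn n × ℂ) →L[ℂ] CnC n).comp
    (((c • ContinuousLinearMap.id ℂ (Cn n)).prodMap
        (c' • ContinuousLinearMap.id ℂ ℂ)).comp
      ((WithLp.prodContinuousLinearEquiv 2 ℂ (Cn n) ℂ) : CnC n →L[ℂ] (Cn n × ℂ))))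

/-- The condition number
`μ̂(f,v,λ) = ‖diag(‖f‖ I_n, ‖f‖^{(d-2)/(d-1)}) ∘ (DF_f(v,λ)|_{v^⊥×ℂ})⁻¹‖`
(the value is meaningful whenever the restriction is invertible);
here `v^⊥ × ℂ = (v,0)^⊥`. -/
def muHat (n d : ℕ) (f : Fin n → MvPolynomial (Fin n) ℂ) (v : Cn n) (lam : ℂ) : ℝ :=
  ‖(diagMap n ((bwNorm n d f : ℝ) : ℂ)
      (((bwNorm n d f) ^ (((d : ℝ) - 2) / ((d : ℝ) - 1)) : ℝ) : ℂ)).comp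
    (((perp (mkPair v 0)).subtypeL).comp
      (DFr n d f (mkPair v lam) (mkPair v 0)).inverse)‖

/-- Smale's `γ(f, ζ, η)`:
`‖(ζ,η)‖ · sup_{k ≥ 2} ‖(DF_f(ζ,η)|_{(ζ,η)^⊥})⁻¹ ∘ (1/k!) D^k F_f(ζ,η)‖^{1/(k-1)}`. -/
def gammaF (n d : ℕ) (f : Fin n → MvPolynomial (Fin n) ℂ) (w : CnC n) : ℝ :=
  ‖w‖ * ⨆ k : ℕ, if 2 ≤ k then
      ‖((DFr n d f w w).inverse).compContinuousMultilinearMap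
          (((Nat.factorial k : ℂ))⁻¹ • iteratedFDeriv ℂ k (FF n d f) w)‖
        ^ ((1 : ℝ) / ((k : ℝ) - 1))
    else 0

/-- Projective distance `d_P(x,y) = arccos(|⟨x,y⟩| / (‖x‖ ‖y‖))`. -/
def dProj {E : Type} [NormedAddCommGroup E] [InnerProductSpace ℂ E] (x y : E) : ℝ :=
  Real.arccos (‖(inner ℂ x y : ℂ)‖ / (‖x‖ * ‖y‖))

/-- Spherical distance `d_S(x,y) = arccos(Re⟨x,y⟩ / (‖x‖ ‖y‖))` for complex vectors
viewed as real vectors. -/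
def dSph {E : Type} [NormedAddCommGroup E] [InnerProductSpace ℂ E] (x y : E) : ℝ :=
  Real.arccos ((inner ℂ x y : ℂ).re / (‖x‖ * ‖y‖))

/-- Spherical distance in a real inner product space. -/
def dSphR {E : Type} [NormedAddCommGroup E] [InnerProductSpace ℝ E] (x y : E) : ℝ :=
  Real.arccos ((inner ℝ x y : ℝ) / (‖x‖ * ‖y‖))

end

/-!
Put `w = (ζ, η)` and `e = (0, 1)`, and let `u` be the component of `e` orthogonal to `w`.
Since `F_f(s w) = s^d F_f(w)` and `F_f(w) = 0`, Euler's identity gives `DF_f(w) w = 0`,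
so `DF_f(w) u = DF_f(w) e = -(d-1) η^{d-2} ζ` and
`‖u‖ ≤ ‖(DF_f(w)|_{w^⊥})⁻¹‖ (d-1) |η|^{d-2} ‖ζ‖`.
The Bombieri–Weyl bound `‖f(ζ)‖ ≤ ‖f‖ ‖ζ‖^d` applied to `f(ζ) = η^{d-1} ζ` gives
`|η| ≤ ‖ζ‖`, hence `‖u‖ ≤ (d-1) μ`, while `‖u‖² = ‖ζ‖² / (‖ζ‖² + |η|²) ≥ 1/2`.
-/

open MvPolynomial
open scoped InnerProductSpace ComplexConjugate Nat

section Projection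

variable {𝕜 E F : Type*} [RCLike 𝕜] [NormedAddCommGroup E] [InnerProductSpace 𝕜 E]
  [NormedAddCommGroup F] [NormedSpace 𝕜 F]

theorem norm_sq_starProjection_orthogonal_singleton (w e : E) :
    ‖(𝕜 ∙ w)ᗮ.starProjection e‖ ^ 2 = ‖e‖ ^ 2 - ‖⟪w, e⟫_𝕜‖ ^ 2 / ‖w‖ ^ 2 := by
  rw [Submodule.norm_sq_eq_add_norm_sq_starProjection e (𝕜 ∙ w),
    Submodule.starProjection_singleton, norm_smul, norm_div, RCLike.norm_ofReal,
    abs_of_nonneg (by positivity)]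
  rcases eq_or_ne w 0 with rfl | hw
  · simp
  · field_simp
    ring

theorem norm_starProjection_orthogonal_le_of_apply_eq_zero {T : E →L[𝕜] F} {w : E}
    (hTw : T w = 0) (hT : (T.comp (𝕜 ∙ w)ᗮ.subtypeL).IsInvertible) (e : E) :
    ‖(𝕜 ∙ w)ᗮ.starProjection e‖ ≤ ‖(T.comp (𝕜 ∙ w)ᗮ.subtypeL).inverse‖ * ‖T e‖ := by
  set S := T.comp (𝕜 ∙ w)ᗮ.subtypeL
  set p := (𝕜 ∙ w)ᗮ.orthogonalProjectionOnto e
  have hSp : S p = T e := by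
    obtain ⟨c, hc⟩ := Submodule.mem_span_singleton.mp ((𝕜 ∙ w).starProjection_apply_mem e)
    conv_rhs => rw [← Submodule.starProjection_add_starProjection_orthogonal (K := 𝕜 ∙ w) e]
    rw [map_add, ← hc, map_smul, hTw, smul_zero, zero_add]
    rfl
  calc ‖(𝕜 ∙ w)ᗮ.starProjection e‖ = ‖S.inverse (S p)‖ := by
        rw [hT.inverse_apply_eq.mpr rfl]
        rfl
    _ ≤ ‖S.inverse‖ * ‖T e‖ := hSp ▸ S.inverse.le_opNorm _

end Projection

theorem fderiv_apply_self_eq_of_smul_eq_pow_smul {𝕜 E F : Type*} [NontriviallyNormedField 𝕜]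
    [NormedAddCommGroup E] [NormedSpace 𝕜 E] [NormedAddCommGroup F] [NormedSpace 𝕜 F]
    {g : E → F} {w : E} (hg : DifferentiableAt 𝕜 g w) {d : ℕ}
    (hhom : ∀ s : 𝕜, g (s • w) = s ^ d • g w) :
    fderiv 𝕜 g w w = (d : 𝕜) • g w := by
  have hchain : HasDerivAt (fun s : 𝕜 => g (s • w)) (fderiv 𝕜 g w w) 1 := by
    rw [← one_smul 𝕜 w] at hg
    simpa [Function.comp_def] using
      hg.hasFDerivAt.comp_hasDerivAt 1 ((hasDerivAt_id (1 : 𝕜)).smul_const w)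
  have hpow : HasDerivAt (fun s : 𝕜 => g (s • w)) ((d : 𝕜) • g w) 1 := by
    simp_rw [hhom]
    simpa using (hasDerivAt_pow d (1 : 𝕜)).smul_const (g w)
  exact hchain.unique hpow

theorem Finset.sum_multinomial_mul_prod_le_pow {σ : Type*} [Fintype σ] {s : Finset (σ →₀ ℕ)}
    {d : ℕ} (hs : ∀ α ∈ s, ∑ j, α j = d) {y : σ → ℝ} (hy : ∀ j, 0 ≤ y j) :
    ∑ α ∈ s, (Nat.multinomial univ α : ℝ) * ∏ j, y j ^ α j ≤ (∑ j, y j) ^ d := by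
  classical
  rw [sum_pow_eq_sum_piAntidiag]
  refine (sum_map s Finsupp.equivFunOnFinite.toEmbedding
      fun k => (Nat.multinomial univ k : ℝ) * ∏ j, y j ^ k j).symm.trans_le
    (sum_le_sum_of_subset_of_nonneg ?_ fun k _ _ => ?_)
  · intro k hk
    obtain ⟨α, hα, rfl⟩ := mem_map.mp hk
    exact mem_piAntidiag.mpr ⟨hs α hα, by simp⟩
  · exact mul_nonneg (Nat.cast_nonneg _) (prod_nonneg fun j _ => pow_nonneg (hy j) _)

namespace MvPolynomial.IsHomogeneous

variable {σ R : Type*} [Fintype σ] [CommSemiring R] {p : MvPolynomial σ R} {d : ℕ}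

theorem sum_eq_of_mem_support (hp : p.IsHomogeneous d) {α : σ →₀ ℕ} (hα : α ∈ p.support) :
    ∑ j, α j = d := by
  rw [← Finsupp.degree_eq_sum]
  by_contra h
  exact mem_support_iff.mp hα (hp.coeff_eq_zero h)

theorem eval_smul (hp : p.IsHomogeneous d) (s : R) (x : σ → R) :
    eval (s • x) p = s ^ d * eval x p := by
  simp only [eval_eq, Finset.mul_sum]
  refine Finset.sum_congr rfl fun α hα => ?_
  rw [← hp.sum_eq_of_mem_support hα]
  simp only [Pi.smul_apply, smul_eq_mul, mul_pow, Finset.prod_mul_distrib,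
    Finset.prod_pow_eq_pow_sum, ← Finsupp.degree_apply, Finsupp.degree_eq_sum]
  ring

/-- Cauchy–Schwarz against the multinomial expansion of `(∑ j, ‖x j‖ ^ 2) ^ d`. -/
theorem norm_eval_sq_le {n : ℕ} {p : MvPolynomial (Fin n) ℂ} (hp : p.IsHomogeneous d)
    (x : Fin n → ℂ) : ‖eval x p‖ ^ 2 ≤ bwNormSq n d p * (∑ j, ‖x j‖ ^ 2) ^ d := by
  have hmult : ∀ α ∈ p.support,
      (Nat.multinomial Finset.univ α : ℝ) * ∏ j, ((α j)! : ℝ) = d ! := by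
    intro α hα
    rw [← hp.sum_eq_of_mem_support hα, ← Nat.multinomial_spec]
    push_cast
    ring
  calc ‖eval x p‖ ^ 2 ≤ (∑ α ∈ p.support, ‖coeff α p‖ * ∏ j, ‖x j‖ ^ α j) ^ 2 := by
        gcongr
        rw [eval_eq']
        refine (norm_sum_le _ _).trans_eq ?_
        simp only [norm_mul, norm_prod, norm_pow]
    _ ≤ bwNormSq n d p * ∑ α ∈ p.support,
          (Nat.multinomial Finset.univ α : ℝ) * ∏ j, (‖x j‖ ^ 2) ^ α j := by
        refine Finset.sum_sq_le_sum_mul_sum_of_sq_le_mul _ (fun _ _ => by positivity)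
          (fun _ _ => by positivity) fun α hα => le_of_eq ?_
        have hpos : (Nat.multinomial Finset.univ α : ℝ) ≠ 0 := by
          exact_mod_cast (Nat.multinomial_pos _ _).ne'
        rw [← hmult α hα]
        field_simp
        simp only [← Finset.prod_pow, ← pow_mul, mul_comm _ 2]
    _ ≤ bwNormSq n d p * (∑ j, ‖x j‖ ^ 2) ^ d := by
        refine mul_le_mul_of_nonneg_left (Finset.sum_multinomial_mul_prod_le_pow
          (fun α hα => hp.sum_eq_of_mem_support hα) fun j => by positivity) ?_
        unfold bwNormSq
        positivity

end MvPolynomial.IsHomogeneous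

section BombieriWeyl

variable {n d : ℕ} {f : Fin n → MvPolynomial (Fin n) ℂ}

theorem bwNormSq_nonneg (p : MvPolynomial (Fin n) ℂ) : 0 ≤ bwNormSq n d p :=
  Finset.sum_nonneg fun _ _ => by positivity

theorem sum_norm_eval_sq_le (hhom : ∀ i, (f i).IsHomogeneous d) (x : Cn n) :
    ∑ i, ‖eval (fun j => x j) (f i)‖ ^ 2 ≤ bwNorm n d f ^ 2 * (‖x‖ ^ 2) ^ d := by
  calc ∑ i, ‖eval (fun j => x j) (f i)‖ ^ 2
      ≤ ∑ i, bwNormSq n d (f i) * (∑ j, ‖x j‖ ^ 2) ^ d :=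
        Finset.sum_le_sum fun i _ => (hhom i).norm_eval_sq_le _
    _ = bwNorm n d f ^ 2 * (‖x‖ ^ 2) ^ d := by
        rw [← Finset.sum_mul, bwNorm, EuclideanSpace.norm_sq_eq,
          Real.sq_sqrt (Finset.sum_nonneg fun i _ => bwNormSq_nonneg (f i))]

theorem norm_pow_le_bwNorm_mul_norm_pow (hd : d ≠ 0) (hhom : ∀ i, (f i).IsHomogeneous d)
    {ζ : Cn n} (hζ : ζ ≠ 0) {η : ℂ}
    (heig : ∀ i, eval (fun j => ζ j) (f i) = η ^ (d - 1) * ζ i) :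
    ‖η‖ ^ (d - 1) ≤ bwNorm n d f * ‖ζ‖ ^ (d - 1) := by
  have key : (‖η‖ ^ (d - 1) * ‖ζ‖) ^ 2 ≤ (bwNorm n d f * ‖ζ‖ ^ (d - 1) * ‖ζ‖) ^ 2 := by
    calc (‖η‖ ^ (d - 1) * ‖ζ‖) ^ 2 = ∑ i, ‖eval (fun j => ζ j) (f i)‖ ^ 2 := by
          simp only [heig, norm_mul, norm_pow, mul_pow, ← Finset.mul_sum,
            EuclideanSpace.norm_sq_eq]
      _ ≤ bwNorm n d f ^ 2 * (‖ζ‖ ^ 2) ^ d := sum_norm_eval_sq_le hhom ζ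
      _ = (bwNorm n d f * ‖ζ‖ ^ (d - 1) * ‖ζ‖) ^ 2 := by
          rw [← pow_sub_one_mul hd]
          ring
  have hbw : 0 ≤ bwNorm n d f := Real.sqrt_nonneg _
  have := (pow_le_pow_iff_left₀ (by positivity) (by positivity) two_ne_zero).mp key
  exact le_of_mul_le_mul_right this (norm_pos_iff.mpr hζ)

theorem norm_le_norm_of_eigenpair (hd : 2 ≤ d) (hhom : ∀ i, (f i).IsHomogeneous d)
    (hf : bwNorm n d f = 1) {ζ : Cn n} (hζ : ζ ≠ 0) {η : ℂ}
    (heig : ∀ i, eval (fun j => ζ j) (f i) = η ^ (d - 1) * ζ i) : ‖η‖ ≤ ‖ζ‖ := by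
  have := norm_pow_le_bwNorm_mul_norm_pow (by omega) hhom hζ heig
  rw [hf, one_mul] at this
  exact (pow_le_pow_iff_left₀ (norm_nonneg _) (norm_nonneg _) (by omega)).mp this

end BombieriWeyl

section DerivativeOfF

variable {n d : ℕ} {f : Fin n → MvPolynomial (Fin n) ℂ}

theorem FF_mkPair_eq_zero {ζ : Cn n} {η : ℂ}
    (heig : ∀ i, eval (fun j => ζ j) (f i) = η ^ (d - 1) * ζ i) :
    FF n d f (mkPair ζ η) = 0 := by
  ext i
  simp [FF, mkPair, heig]

theorem FF_smul (hd : d ≠ 0) (hhom : ∀ i, (f i).IsHomogeneous d) (s : ℂ) (w : CnC n) :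
    FF n d f (s • w) = s ^ d • FF n d f w := by
  ext i
  simp only [FF, WithLp.equiv_apply, WithLp.equiv_symm_apply, PiLp.toLp_apply,
    WithLp.ofLp_smul, Prod.smul_fst, Prod.smul_snd, PiLp.smul_apply]
  rw [← Pi.smul_def, (hhom i).eval_smul, smul_eq_mul, smul_eq_mul, smul_eq_mul, mul_pow,
    ← pow_sub_one_mul hd s]
  ring

theorem differentiable_FF (n d : ℕ) (f : Fin n → MvPolynomial (Fin n) ℂ) :
    Differentiable ℂ (FF n d f) := by
  let L : CnC n →L[ℂ] Fin n → ℂ :=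
    (PiLp.continuousLinearEquiv 2 ℂ fun _ : Fin n => ℂ).toContinuousLinearMap ∘L
      ContinuousLinearMap.fst ℂ (Cn n) ℂ ∘L
        (WithLp.prodContinuousLinearEquiv 2 ℂ (Cn n) ℂ).toContinuousLinearMap
  let Λ : CnC n →L[ℂ] ℂ := ContinuousLinearMap.snd ℂ (Cn n) ℂ ∘L
    (WithLp.prodContinuousLinearEquiv 2 ℂ (Cn n) ℂ).toContinuousLinearMap
  change Differentiable ℂ fun w =>
    WithLp.toLp 2 fun i => eval (L w) (f i) - Λ w ^ (d - 1) * L w i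
  refine (differentiable_piLp (p := 2)).mpr fun i w => ?_
  exact (AnalyticOnNhd.eval_continuousLinearMap L (f i) w trivial).differentiableAt.sub
    (by fun_prop)

theorem fderiv_FF_mkPair_apply_self_eq_zero (hd : d ≠ 0) (hhom : ∀ i, (f i).IsHomogeneous d)
    {ζ : Cn n} {η : ℂ} (heig : ∀ i, eval (fun j => ζ j) (f i) = η ^ (d - 1) * ζ i) :
    fderiv ℂ (FF n d f) (mkPair ζ η) (mkPair ζ η) = 0 := by
  rw [fderiv_apply_self_eq_of_smul_eq_pow_smul (differentiable_FF n d f _)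
    (FF_smul hd hhom · _), FF_mkPair_eq_zero heig, smul_zero]

theorem fderiv_FF_mkPair_apply_mkPair_zero_one (ζ : Cn n) (η : ℂ) :
    fderiv ℂ (FF n d f) (mkPair ζ η) (mkPair 0 1) =
      -(((d - 1 : ℕ) : ℂ) * η ^ (d - 1 - 1)) • ζ := by
  have hchain : HasDerivAt (fun s : ℂ => FF n d f (mkPair ζ η + s • mkPair 0 1))
      (fderiv ℂ (FF n d f) (mkPair ζ η) (mkPair 0 1)) 0 := by
    have := (differentiable_FF n d f _).hasFDerivAt.comp_hasDerivAt (0 : ℂ)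
      (((hasDerivAt_id (0 : ℂ)).smul_const (mkPair 0 1)).const_add (mkPair ζ η))
    simpa [Function.comp_def] using this
  have hpow : HasDerivAt (fun s : ℂ => FF n d f (mkPair ζ η + s • mkPair 0 1))
      (-(((d - 1 : ℕ) : ℂ) * η ^ (d - 1 - 1)) • ζ) 0 := by
    have hline : (fun s : ℂ => FF n d f (mkPair ζ η + s • mkPair 0 1)) =
        fun s =>
          WithLp.toLp 2 (fun i => eval (fun j => ζ j) (f i)) - (η + s) ^ (d - 1) • ζ := by
      funext s
      ext i
      simp [FF, mkPair]
    rw [hline]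
    simpa using ((((hasDerivAt_id (0 : ℂ)).const_add η).pow (d - 1)).smul_const ζ).const_sub _
  exact hchain.unique hpow

theorem norm_fderiv_FF_mkPair_apply_mkPair_zero_one_le (hd : 2 ≤ d) {ζ : Cn n} {η : ℂ}
    (hηζ : ‖η‖ ≤ ‖ζ‖) :
    ‖fderiv ℂ (FF n d f) (mkPair ζ η) (mkPair 0 1)‖ ≤ (d - 1 : ℕ) * ‖ζ‖ ^ (d - 1) := by
  rw [fderiv_FF_mkPair_apply_mkPair_zero_one, norm_smul, norm_neg, norm_mul, norm_pow,
    Complex.norm_natCast, mul_assoc, ← pow_sub_one_mul (by omega : d - 1 ≠ 0) ‖ζ‖]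
  gcongr

end DerivativeOfF

theorem inner_mkPair_mkPair {n : ℕ} (v w : Cn n) (s t : ℂ) :
    ⟪mkPair v s, mkPair w t⟫_ℂ = ⟪v, w⟫_ℂ + conj s * t := by
  simp [mkPair, WithLp.prod_inner_apply, mul_comm]

theorem norm_mkPair_sq {n : ℕ} (v : Cn n) (t : ℂ) : ‖mkPair v t‖ ^ 2 = ‖v‖ ^ 2 + ‖t‖ ^ 2 :=
  WithLp.prod_norm_sq_eq_of_L2 _

theorem one_half_le_norm_sq_starProjection_orthogonal_mkPair_zero_one {n : ℕ} {ζ : Cn n}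
    {η : ℂ} (hηζ : ‖η‖ ≤ ‖ζ‖) :
    1 / 2 ≤ ‖(ℂ ∙ mkPair ζ η)ᗮ.starProjection (mkPair 0 1)‖ ^ 2 := by
  rw [norm_sq_starProjection_orthogonal_singleton, inner_mkPair_mkPair, norm_mkPair_sq,
    norm_mkPair_sq, inner_zero_right, zero_add, mul_one, RCLike.norm_conj, norm_zero, norm_one]
  have : ‖η‖ ^ 2 / (‖ζ‖ ^ 2 + ‖η‖ ^ 2) ≤ 1 / 2 :=
    div_le_of_le_mul₀ (by positivity) (by norm_num) (by nlinarith [norm_nonneg η])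
  linarith

theorem mu_mkPair {n d : ℕ} (f : Fin n → MvPolynomial (Fin n) ℂ) (ζ : Cn n) (η : ℂ) :
    mu n d f (mkPair ζ η) = ‖ζ‖ ^ (d - 1) * ‖(DFr n d f (mkPair ζ η) (mkPair ζ η)).inverse‖ :=
  rfl

theorem norm_starProjection_orthogonal_mkPair_zero_one_le_mul_mu {n d : ℕ} (hd : 2 ≤ d)
    {f : Fin n → MvPolynomial (Fin n) ℂ} (hhom : ∀ i, (f i).IsHomogeneous d)
    {ζ : Cn n} {η : ℂ} (heig : ∀ i, eval (fun j => ζ j) (f i) = η ^ (d - 1) * ζ i)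
    (hinv : RestrInvertible n d f (mkPair ζ η) (mkPair ζ η)) (hηζ : ‖η‖ ≤ ‖ζ‖) :
    ‖(ℂ ∙ mkPair ζ η)ᗮ.starProjection (mkPair 0 1)‖ ≤
      (d - 1 : ℕ) * mu n d f (mkPair ζ η) := by
  set S := DFr n d f (mkPair ζ η) (mkPair ζ η)
  calc ‖(ℂ ∙ mkPair ζ η)ᗮ.starProjection (mkPair 0 1)‖
      ≤ ‖S.inverse‖ * ‖fderiv ℂ (FF n d f) (mkPair ζ η) (mkPair 0 1)‖ :=
        norm_starProjection_orthogonal_le_of_apply_eq_zero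
          (fderiv_FF_mkPair_apply_self_eq_zero (by omega) hhom heig) hinv _
    _ ≤ ‖S.inverse‖ * ((d - 1 : ℕ) * ‖ζ‖ ^ (d - 1)) := by
        gcongr
        exact norm_fderiv_FF_mkPair_apply_mkPair_zero_one_le hd hηζ
    _ = (d - 1 : ℕ) * mu n d f (mkPair ζ η) := by
        rw [mu_mkPair]
        ring

theorem one_le_two_d_mu_general (n d : ℕ) (hd : 2 ≤ d)
    (f : Fin n → MvPolynomial (Fin n) ℂ) (hhom : ∀ i, (f i).IsHomogeneous d)
    (hf : bwNorm n d f = 1)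
    (ζ : Cn n) (hζ : ζ ≠ 0) (η : ℂ)
    (heig : ∀ i, MvPolynomial.eval (fun j => ζ j) (f i) = η ^ (d - 1) * ζ i)
    (hinv : RestrInvertible n d f (mkPair ζ η) (mkPair ζ η)) :
    1 ≤ 2 * (d : ℝ) * mu n d f (mkPair ζ η) := by
  have hηζ := norm_le_norm_of_eigenpair hd hhom hf hζ heig
  have hu := norm_starProjection_orthogonal_mkPair_zero_one_le_mul_mu hd hhom heig hinv hηζ
  have hhalf := one_half_le_norm_sq_starProjection_orthogonal_mkPair_zero_one hηζ
  have hμ : 0 ≤ mu n d f (mkPair ζ η) := by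
    rw [mu_mkPair]
    positivity
  have hud := hu.trans (mul_le_mul_of_nonneg_right (Nat.cast_le.mpr (Nat.sub_le d 1)) hμ)
  nlinarith [norm_nonneg ((ℂ ∙ mkPair ζ η)ᗮ.starProjection (mkPair 0 1))]

theorem one_le_two_d_mu (n d : ℕ) (hn : 2 ≤ n) (hd : 2 ≤ d)
    (f : Fin n → MvPolynomial (Fin n) ℂ) (hhom : ∀ i, (f i).IsHomogeneous d)
    (hf : bwNorm n d f = 1)
    (ζ : Cn n) (hζ : ζ ≠ 0) (η : ℂ)
    (heig : ∀ i, MvPolynomial.eval (fun j => ζ j) (f i) = η ^ (d - 1) * ζ i)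
    (hinv : RestrInvertible n d f (mkPair ζ η) (mkPair ζ η)) :
    1 ≤ 2 * (d : ℝ) * mu n d f (mkPair ζ η) :=
  one_le_two_d_mu_general n d hd f hhom hf ζ hζ η heig hinv
end

section
/- Let A : ℂ^{n+1} → ℂⁿ be a linear map of rank n with kernel ℂ·v for some v ≠ 0, and let u ∈ ℂ^{n+1}∖{0} be such that the restriction A|_{u^⊥} : u^⊥ → ℂⁿ is invertible. Then the restriction A|_{v^⊥} : v^⊥ → ℂⁿ is invertible and ‖(A|_{v^⊥})^{−1}‖ ≤ ‖(A|_{u^⊥})^{−1}‖ in operator norm. -/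
/-!
If `ker A = Kᗮ`, then `A` factors through the orthogonal projection `P` onto `K`, so for any
subspace `L` on which `A` restricts to an isomorphism, `P ∘ (A|_L)⁻¹` inverts `A|_K`.
Since `‖P‖ ≤ 1`, this inverse is no larger than `(A|_L)⁻¹`.
-/

open Submodule ContinuousLinearMap

section

variable {𝕜 E F : Type*} [RCLike 𝕜] [NormedAddCommGroup E] [InnerProductSpace 𝕜 E]
  [NormedAddCommGroup F] [NormedSpace 𝕜 F] {A : E →L[𝕜] F} {K : Submodule 𝕜 E}
  [K.HasOrthogonalProjection]

theorem orthogonalProjectionOnto_eq_of_ker_eq_orthogonal (hker : LinearMap.ker A.toLinearMap = Kᗮ)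
    {x : E} {z : K} (h : A x = A z) : K.orthogonalProjectionOnto x = z := by
  have hxz : x - z ∈ Kᗮ := by
    rw [← hker, LinearMap.mem_ker, coe_coe, map_sub, h, sub_self]
  exact Subtype.ext (eq_starProjection_of_mem_orthogonal z.2 hxz)

theorem comp_starProjection_of_ker_eq_orthogonal (hker : LinearMap.ker A.toLinearMap = Kᗮ) :
    A ∘L K.starProjection = A := by
  ext x
  have hx : x - K.starProjection x ∈ LinearMap.ker A.toLinearMap :=
    hker ▸ sub_starProjection_mem_orthogonal x
  rw [LinearMap.mem_ker, coe_coe, map_sub, sub_eq_zero] at hx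
  exact hx.symm

variable {L : Submodule 𝕜 E}

theorem comp_subtypeL_comp_orthogonalProjectionOnto_inverse
    (hker : LinearMap.ker A.toLinearMap = Kᗮ) (hL : (A ∘L L.subtypeL).IsInvertible) :
    (A ∘L K.subtypeL) ∘L K.orthogonalProjectionOnto ∘L L.subtypeL ∘L (A ∘L L.subtypeL).inverse =
      .id 𝕜 F := by
  calc (A ∘L K.subtypeL) ∘L K.orthogonalProjectionOnto ∘L L.subtypeL ∘L (A ∘L L.subtypeL).inverse
      = (A ∘L K.starProjection) ∘L L.subtypeL ∘L (A ∘L L.subtypeL).inverse := rfl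
    _ = .id 𝕜 F := by
      rw [comp_starProjection_of_ker_eq_orthogonal hker, ← comp_assoc, hL.self_comp_inverse]

theorem orthogonalProjectionOnto_inverse_comp_comp_subtypeL
    (hker : LinearMap.ker A.toLinearMap = Kᗮ) (hL : (A ∘L L.subtypeL).IsInvertible) :
    (K.orthogonalProjectionOnto ∘L L.subtypeL ∘L (A ∘L L.subtypeL).inverse) ∘L A ∘L K.subtypeL =
      .id 𝕜 K := by
  ext1 z
  exact orthogonalProjectionOnto_eq_of_ker_eq_orthogonal hker (hL.self_apply_inverse (A z))

theorem inverse_comp_subtypeL_of_ker_eq_orthogonal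
    (hker : LinearMap.ker A.toLinearMap = Kᗮ) (hL : (A ∘L L.subtypeL).IsInvertible) :
    (A ∘L K.subtypeL).IsInvertible ∧
      (A ∘L K.subtypeL).inverse =
        K.orthogonalProjectionOnto ∘L L.subtypeL ∘L (A ∘L L.subtypeL).inverse :=
  ⟨.of_inverse (comp_subtypeL_comp_orthogonalProjectionOnto_inverse hker hL)
      (orthogonalProjectionOnto_inverse_comp_comp_subtypeL hker hL),
    inverse_eq (comp_subtypeL_comp_orthogonalProjectionOnto_inverse hker hL)
      (orthogonalProjectionOnto_inverse_comp_comp_subtypeL hker hL)⟩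

theorem norm_inverse_comp_subtypeL_le_of_ker_eq_orthogonal
    (hker : LinearMap.ker A.toLinearMap = Kᗮ) (hL : (A ∘L L.subtypeL).IsInvertible) :
    ‖(A ∘L K.subtypeL).inverse‖ ≤ ‖(A ∘L L.subtypeL).inverse‖ := by
  rw [(inverse_comp_subtypeL_of_ker_eq_orthogonal hker hL).2]
  calc ‖K.orthogonalProjectionOnto ∘L L.subtypeL ∘L (A ∘L L.subtypeL).inverse‖
      ≤ ‖K.orthogonalProjectionOnto‖ * (‖L.subtypeL‖ * ‖(A ∘L L.subtypeL).inverse‖) :=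
        (opNorm_comp_le _ _).trans (by gcongr; exact opNorm_comp_le _ _)
    _ ≤ 1 * (1 * ‖(A ∘L L.subtypeL).inverse‖) := by
        gcongr
        · exact orthogonalProjectionOnto_norm_le K
        · exact norm_subtypeL_le L
    _ = ‖(A ∘L L.subtypeL).inverse‖ := by ring

end

theorem inverse_norm_le_of_kernel_general (n : ℕ)
    (A : EuclideanSpace ℂ (Fin (n + 1)) →L[ℂ] EuclideanSpace ℂ (Fin n))
    (v : EuclideanSpace ℂ (Fin (n + 1)))
    (hker : LinearMap.ker A.toLinearMap = ℂ ∙ v)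
    (u : EuclideanSpace ℂ (Fin (n + 1)))
    (hu_inv : (A.comp ((ℂ ∙ u)ᗮ).subtypeL).IsInvertible) :
    (A.comp ((ℂ ∙ v)ᗮ).subtypeL).IsInvertible ∧
      ‖(A.comp ((ℂ ∙ v)ᗮ).subtypeL).inverse‖ ≤ ‖(A.comp ((ℂ ∙ u)ᗮ).subtypeL).inverse‖ := by
  have hker' : LinearMap.ker A.toLinearMap = (ℂ ∙ v)ᗮᗮ := by
    rw [orthogonal_orthogonal, hker]
  exact ⟨(inverse_comp_subtypeL_of_ker_eq_orthogonal hker' hu_inv).1,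
    norm_inverse_comp_subtypeL_le_of_ker_eq_orthogonal hker' hu_inv⟩

theorem inverse_norm_le_of_kernel (n : ℕ)
    (A : EuclideanSpace ℂ (Fin (n + 1)) →L[ℂ] EuclideanSpace ℂ (Fin n))
    (v : EuclideanSpace ℂ (Fin (n + 1))) (hv : v ≠ 0)
    (hker : LinearMap.ker A.toLinearMap = ℂ ∙ v)
    (hrk : LinearMap.range A.toLinearMap = ⊤)
    (u : EuclideanSpace ℂ (Fin (n + 1))) (hu : u ≠ 0)
    (hu_inv : (A.comp ((ℂ ∙ u)ᗮ).subtypeL).IsInvertible) :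
    (A.comp ((ℂ ∙ v)ᗮ).subtypeL).IsInvertible ∧
      ‖(A.comp ((ℂ ∙ v)ᗮ).subtypeL).inverse‖ ≤ ‖(A.comp ((ℂ ∙ u)ᗮ).subtypeL).inverse‖ :=
  inverse_norm_le_of_kernel_general n A v hker u hu_inv
end

section
/- Let m ≥ 1, let a ∈ ℂᵐ be fixed, and let z be a standard complex Gaussian random vector in ℂᵐ (the 2m real coordinates given by the real and imaginary parts of the entries are independent centered real Gaussians of variance 1/2). Then the probability that ‖z − a‖ ≤ ‖z‖ is at least (1/√π) · 2·exp(−‖a‖²/4) / (‖a‖ + √(‖a‖² + 8)). -/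
open MeasureTheory

noncomputable section

/-- The hermitian (Euclidean) norm on `ℂᵐ`. -/
def hermNorm {m : ℕ} (z : Fin m → ℂ) : ℝ :=
  Real.sqrt (∑ j, ‖z j‖ ^ 2)

end

/-!
The event `‖z - a‖ ≤ ‖z‖` is the half-space `Re ⟨a, z⟩ ≥ ‖a‖² / 2`. Computing characteristic
functions coordinate by coordinate with the Gaussian integral shows that `Re ⟨a, z⟩` has the law
of `‖a‖ X` with `X ~ N(0, 1/2)`, whose density is `exp (-x²) / √π`. Since `{x | ‖a‖ x ≥ ‖a‖² / 2}`
contains `(‖a‖ / 2, ∞)`, the probability is at least `(1 / √π) ∫_{‖a‖/2}^∞ exp (-x²) dx`.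
For `t ≥ 0` the tail `∫_t^∞ exp (-x²) dx` is at least `exp (-t²) / (t + √(t² + 2))`, because
minus the derivative of the latter is dominated by `exp (-x²)`; at `t = ‖a‖ / 2` this is the
claimed bound.
-/

open Real Set Filter Topology ProbabilityTheory Complex
open scoped RealInnerProductSpace

lemma add_sqrt_sq_add_two_pos (x : ℝ) : 0 < x + √(x ^ 2 + 2) := by
  have : |x| < √(x ^ 2 + 2) := by
    rw [← sqrt_sq_eq_abs]
    exact sqrt_lt_sqrt (sq_nonneg x) (by linarith)
  linarith [neg_abs_le x]

lemma hasDerivAt_exp_neg_sq_div (x : ℝ) :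
    HasDerivAt (fun y => rexp (-y ^ 2) / (y + √(y ^ 2 + 2)))
      (-(rexp (-x ^ 2) * (2 * x * √(x ^ 2 + 2) + 1) / (√(x ^ 2 + 2) * (x + √(x ^ 2 + 2))))) x := by
  have hd := add_sqrt_sq_add_two_pos x
  have hsqrt : HasDerivAt (fun y => √(y ^ 2 + 2)) (2 * x / (2 * √(x ^ 2 + 2))) x := by
    simpa using ((hasDerivAt_pow 2 x).add_const 2).sqrt (by positivity)
  have hexp : HasDerivAt (fun y => rexp (-y ^ 2)) (rexp (-x ^ 2) * -(2 * x)) x := by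
    simpa using (hasDerivAt_pow 2 x).neg.exp
  refine (hexp.fun_div ((hasDerivAt_id' x).fun_add hsqrt) hd.ne').congr_deriv ?_
  field_simp
  ring

lemma tendsto_exp_neg_sq_div_atTop :
    Tendsto (fun y => rexp (-y ^ 2) / (y + √(y ^ 2 + 2))) atTop (𝓝 0) := by
  have hexp : Tendsto (fun y : ℝ => rexp (-y ^ 2)) atTop (𝓝 0) :=
    tendsto_exp_atBot.comp (tendsto_neg_atTop_atBot.comp (tendsto_pow_atTop two_ne_zero))
  have hden : Tendsto (fun y : ℝ => y + √(y ^ 2 + 2)) atTop atTop :=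
    tendsto_atTop_mono (fun y => le_add_of_nonneg_right (sqrt_nonneg _)) tendsto_id
  simpa [div_eq_mul_inv] using hexp.mul hden.inv_tendsto_atTop

theorem exp_neg_sq_div_le_integral_Ioi {t : ℝ} (ht : 0 ≤ t) :
    rexp (-t ^ 2) / (t + √(t ^ 2 + 2)) ≤ ∫ x in Ioi t, rexp (-x ^ 2) := by
  set f : ℝ → ℝ := fun x =>
    rexp (-x ^ 2) * (2 * x * √(x ^ 2 + 2) + 1) / (√(x ^ 2 + 2) * (x + √(x ^ 2 + 2)))
  have hf_nonneg : ∀ x ∈ Ioi t, 0 ≤ f x := fun x hx => by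
    have : 0 < x := ht.trans_lt hx
    have := add_sqrt_sq_add_two_pos x
    positivity
  have hf_le : ∀ x ∈ Ioi t, f x ≤ rexp (-x ^ 2) := fun x hx => by
    have hs2 : √(x ^ 2 + 2) ^ 2 = x ^ 2 + 2 := sq_sqrt (by positivity)
    have hd := add_sqrt_sq_add_two_pos x
    rw [div_le_iff₀ (by positivity)]
    gcongr
    -- this reduces to `x √(x² + 2) ≤ x² + 1`, true since `x² (x² + 2) ≤ (x² + 1)²`
    nlinarith [sq_nonneg (x * √(x ^ 2 + 2) - x ^ 2 - 1)]
  have hFTC := integral_Ioi_of_hasDerivAt_of_nonneg'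
    (fun x _ => (hasDerivAt_exp_neg_sq_div x).fun_neg) (by simpa using hf_nonneg)
    (by simpa using tendsto_exp_neg_sq_div_atTop.neg)
  calc rexp (-t ^ 2) / (t + √(t ^ 2 + 2)) = ∫ x in Ioi t, f x := by simpa using hFTC.symm
    _ ≤ ∫ x in Ioi t, rexp (-x ^ 2) :=
      integral_mono_of_nonneg (ae_restrict_of_forall_mem measurableSet_Ioi hf_nonneg)
        (by simpa using (integrable_exp_neg_mul_sq one_pos).restrict)
        (ae_restrict_of_forall_mem measurableSet_Ioi hf_le)

lemma hermNorm_sq {m : ℕ} (z : Fin m → ℂ) : hermNorm z ^ 2 = ∑ j, ‖z j‖ ^ 2 :=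
  sq_sqrt (by positivity)

noncomputable def complexGaussianPDF (w : ℂ) : ℝ := π⁻¹ * rexp (-‖w‖ ^ 2)

lemma complexGaussianPDF_nonneg (w : ℂ) : 0 ≤ complexGaussianPDF w := by
  unfold complexGaussianPDF
  positivity

@[fun_prop]
lemma measurable_complexGaussianPDF : Measurable complexGaussianPDF := by
  unfold complexGaussianPDF
  fun_prop

lemma integral_complexGaussianPDF_mul_cexp (c u : ℂ) :
    ∫ w, (complexGaussianPDF w : ℂ) * cexp (c * ⟪u, w⟫) = cexp (c ^ 2 * ‖u‖ ^ 2 / 4) := by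
  have h := GaussianFourier.integral_cexp_neg_mul_sq_norm_add (V := ℂ) (b := 1) (by simp) c u
  simp only [Complex.finrank_real_complex, Nat.cast_ofNat, div_self (two_ne_zero' ℂ), cpow_one,
    div_one, mul_one, neg_mul, one_mul] at h
  simp_rw [complexGaussianPDF, ofReal_mul, ofReal_exp, mul_assoc, ← Complex.exp_add]
  rw [integral_const_mul]
  push_cast
  rw [h, ← mul_assoc, inv_mul_cancel₀ (ofReal_ne_zero.2 pi_ne_zero), one_mul]

lemma integral_complexGaussianPDF : ∫ w, complexGaussianPDF w = 1 := by
  simpa [integral_complex_ofReal] using integral_complexGaussianPDF_mul_cexp 0 0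

lemma integrable_complexGaussianPDF : Integrable complexGaussianPDF :=
  .of_integral_ne_zero (by simp [integral_complexGaussianPDF])

noncomputable def stdComplexGaussian (m : ℕ) : Measure (Fin m → ℂ) :=
  volume.withDensity fun z => ENNReal.ofReal (∏ j, complexGaussianPDF (z j))

instance (m : ℕ) : IsProbabilityMeasure (stdComplexGaussian m) where
  measure_univ := by
    have hint : Integrable fun z : Fin m → ℂ => ∏ j, complexGaussianPDF (z j) :=
      .fintype_prod fun _ => integrable_complexGaussianPDF
    rw [stdComplexGaussian, withDensity_apply _ MeasurableSet.univ, Measure.restrict_univ,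
      ← ofReal_integral_eq_lintegral_ofReal hint
        (ae_of_all _ fun z => Finset.prod_nonneg fun j _ => complexGaussianPDF_nonneg (z j)),
      integral_fintype_prod_volume_eq_pow, integral_complexGaussianPDF, one_pow,
      ENNReal.ofReal_one]

lemma stdComplexGaussian_eq_withDensity (m : ℕ) : stdComplexGaussian m =
    volume.withDensity fun z => ENNReal.ofReal (π ^ (-(m : ℤ)) * rexp (-hermNorm z ^ 2)) := by
  unfold stdComplexGaussian complexGaussianPDF
  simp_rw [Finset.prod_mul_distrib, Finset.prod_const, Finset.card_univ, Fintype.card_fin,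
    ← Real.exp_sum, hermNorm_sq, Finset.sum_neg_distrib, zpow_neg, zpow_natCast, inv_pow]

noncomputable def reInner {m : ℕ} (a z : Fin m → ℂ) : ℝ := ∑ j, ⟪a j, z j⟫

lemma measurable_reInner {m : ℕ} (a : Fin m → ℂ) : Measurable (reInner a) := by
  unfold reInner
  fun_prop

lemma hermNorm_sub_le_iff {m : ℕ} (a z : Fin m → ℂ) :
    hermNorm (z - a) ≤ hermNorm z ↔ hermNorm a ^ 2 / 2 ≤ reInner a z := by
  rw [hermNorm, hermNorm, sqrt_le_sqrt_iff (by positivity)]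
  simp_rw [Pi.sub_apply, norm_sub_sq_real, Finset.sum_add_distrib, Finset.sum_sub_distrib,
    ← Finset.mul_sum, ← hermNorm_sq, reInner, real_inner_comm (a _)]
  constructor <;> intro <;> linarith

lemma charFun_map_reInner_stdComplexGaussian {m : ℕ} (a : Fin m → ℂ) (t : ℝ) :
    charFun ((stdComplexGaussian m).map (reInner a)) t = cexp (-(t ^ 2 * hermNorm a ^ 2 / 4)) := by
  rw [charFun_apply_real, integral_map (measurable_reInner a).aemeasurable (by fun_prop),
    stdComplexGaussian, integral_withDensity_eq_integral_toReal_smul (by fun_prop)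
      (ae_of_all _ fun _ => ENNReal.ofReal_lt_top)]
  have hfactor (z : Fin m → ℂ) :
      (ENNReal.ofReal (∏ j, complexGaussianPDF (z j))).toReal • cexp (t * reInner a z * I) =
        ∏ j, (complexGaussianPDF (z j) : ℂ) * cexp ((t * I) * ⟪a j, z j⟫) := by
    rw [ENNReal.toReal_ofReal (Finset.prod_nonneg fun j _ => complexGaussianPDF_nonneg (z j)),
      Finset.prod_mul_distrib, ← Complex.exp_sum, Complex.real_smul, ofReal_prod, reInner]
    push_cast
    rw [Finset.mul_sum, Finset.sum_mul]
    congr 2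
    exact Finset.sum_congr rfl fun j _ => by ring
  simp_rw [hfactor, integral_fintype_prod_volume_eq_prod
    (fun j w => (complexGaussianPDF w : ℂ) * cexp ((t * I) * ⟪a j, w⟫)),
    integral_complexGaussianPDF_mul_cexp, ← Complex.exp_sum, ← ofReal_pow, hermNorm_sq]
  push_cast
  rw [Finset.mul_sum, Finset.sum_div, ← Finset.sum_neg_distrib]
  congr 1
  refine Finset.sum_congr rfl fun j _ => ?_
  rw [mul_pow, I_sq]
  ring

lemma map_reInner_stdComplexGaussian {m : ℕ} (a : Fin m → ℂ) :
    (stdComplexGaussian m).map (reInner a) = (gaussianReal 0 2⁻¹).map (hermNorm a * ·) := by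
  refine Measure.ext_of_charFun (funext fun t => ?_)
  rw [charFun_map_reInner_stdComplexGaussian, charFun_map_mul, charFun_gaussianReal]
  congr 1
  push_cast
  ring

lemma gaussianReal_inv_two_real_Ioi (t : ℝ) :
    (gaussianReal 0 2⁻¹).real (Ioi t) = (√π)⁻¹ * ∫ x in Ioi t, rexp (-x ^ 2) := by
  rw [measureReal_def, gaussianReal_apply_eq_integral _ (by norm_num),
    ENNReal.toReal_ofReal
      (setIntegral_nonneg measurableSet_Ioi fun x _ => gaussianPDFReal_nonneg _ _ x),
    ← integral_const_mul]
  congr with x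
  simp [gaussianPDFReal, mul_left_comm (√2)]

theorem gaussian_shift_probability_general (m : ℕ) (a : Fin m → ℂ) :
    (1 / Real.sqrt Real.pi) *
        (2 * Real.exp (-hermNorm a ^ 2 / 4) / (hermNorm a + Real.sqrt (hermNorm a ^ 2 + 8)))
      ≤ ((volume : Measure (Fin m → ℂ)).withDensity
            (fun z => ENNReal.ofReal (Real.pi ^ (-(m : ℤ)) * Real.exp (-hermNorm z ^ 2)))
          {z | hermNorm (z - a) ≤ hermNorm z}).toReal := by
  set s := hermNorm a
  have hs : 0 ≤ s := sqrt_nonneg _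
  have hset : {z | hermNorm (z - a) ≤ hermNorm z} = reInner a ⁻¹' Ici (s ^ 2 / 2) := by
    ext z
    exact hermNorm_sub_le_iff a z
  have hhalf : Ioi (s / 2) ⊆ (s * ·) ⁻¹' Ici (s ^ 2 / 2) := fun x hx => by
    simp only [mem_preimage, mem_Ici]
    nlinarith [mem_Ioi.1 hx]
  have hroot : √((s / 2) ^ 2 + 2) = √(s ^ 2 + 8) / 2 := by
    rw [show (s / 2) ^ 2 + 2 = (s ^ 2 + 8) / 2 ^ 2 by ring, sqrt_div' _ (by positivity),
      sqrt_sq zero_le_two]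
  rw [← stdComplexGaussian_eq_withDensity, hset, ← measureReal_def,
    ← map_measureReal_apply (measurable_reInner a) measurableSet_Ici,
    map_reInner_stdComplexGaussian, map_measureReal_apply (by fun_prop) measurableSet_Ici]
  calc _ = (√π)⁻¹ * (rexp (-(s / 2) ^ 2) / (s / 2 + √((s / 2) ^ 2 + 2))) := by
        rw [hroot]
        field_simp
        ring_nf
    _ ≤ (√π)⁻¹ * ∫ x in Ioi (s / 2), rexp (-x ^ 2) := by
        gcongr
        exact exp_neg_sq_div_le_integral_Ioi (by positivity)
    _ = (gaussianReal 0 2⁻¹).real (Ioi (s / 2)) := (gaussianReal_inv_two_real_Ioi _).symm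
    _ ≤ _ := measureReal_mono hhalf

/-- If `z` is a standard complex Gaussian vector in `ℂᵐ` (density `π^{-m}·exp(-‖z‖²)` w.r.t.
Lebesgue measure) and `a ∈ ℂᵐ` is fixed, then
`Prob{‖z - a‖ ≤ ‖z‖} ≥ (1/√π)·2·exp(-‖a‖²/4)/(‖a‖ + √(‖a‖²+8))`. -/
theorem gaussian_shift_probability (m : ℕ) (hm : 1 ≤ m) (a : Fin m → ℂ) :
    (1 / Real.sqrt Real.pi) *
        (2 * Real.exp (-hermNorm a ^ 2 / 4) / (hermNorm a + Real.sqrt (hermNorm a ^ 2 + 8)))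
      ≤ ((volume : Measure (Fin m → ℂ)).withDensity
            (fun z => ENNReal.ofReal (Real.pi ^ (-(m : ℤ)) * Real.exp (-hermNorm z ^ 2)))
          {z | hermNorm (z - a) ≤ hermNorm z}).toReal :=
  gaussian_shift_probability_general m a
end
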